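/- Let f: ℝⁿ → ℝ be twice continuously differentiable with M-Lipschitz Hessian, and suppose (∇²f(x)+μI)d = -∇f(x) with M‖d‖ ≤ μ ≤ 2M‖d‖. Then ⟨∇f(x+d), −d⟩ ≥ (√6/6)·‖∇f(x+d)‖^{3/2}/√M. -/

import Mathlib

open Real
open scoped RealInnerProductSpace

/-! With `r = ∇f(x+d) - ∇f(x) - ∇²f(x) d` the Taylor remainder, the equation for `d` says
`∇f(x+d) = r - μ d`, so `2μ ⟪∇f(x+d), -d⟫ = ‖∇f(x+d)‖² + μ²‖d‖² - ‖r‖²`. The Lipschitz Hessian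
gives `‖r‖ ≤ M/2 ‖d‖²`, and with `M‖d‖ ≤ μ ≤ 2M‖d‖` this bounds `⟪∇f(x+d), -d⟫` below by
`h(‖d‖)`, where `h(t) = ‖∇f(x+d)‖²/(4Mt) + (3/16)Mt³`; the claim is the minimum of `h`. -/

theorem ContDiff.gradient {F : Type*} [NormedAddCommGroup F] [InnerProductSpace ℝ F]
    [CompleteSpace F] {f : F → ℝ} {n : WithTop ℕ∞} (hf : ContDiff ℝ (n + 1) f) :
    ContDiff ℝ n (gradient f) :=
  (InnerProductSpace.toDual ℝ F).symm.contDiff.comp (hf.fderiv_right le_rfl)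

theorem norm_sub_sub_fderiv_le_of_lipschitz_fderiv {E F : Type*} [NormedAddCommGroup E]
    [NormedSpace ℝ E] [NormedAddCommGroup F] [NormedSpace ℝ F] {φ : E → F} {M : ℝ}
    (hφ : Differentiable ℝ φ) (hLip : ∀ u v, ‖fderiv ℝ φ u - fderiv ℝ φ v‖ ≤ M * ‖u - v‖)
    (x d : E) :
    ‖φ (x + d) - φ x - fderiv ℝ φ x d‖ ≤ M / 2 * ‖d‖ ^ 2 := by
  set ψ : ℝ → F := fun t => φ (x + t • d) - φ x - t • fderiv ℝ φ x d
  have hψ : ∀ t, HasDerivAt ψ (fderiv ℝ φ (x + t • d) d - fderiv ℝ φ x d) t := by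
    intro t
    have hline : HasDerivAt (fun s : ℝ => x + s • d) d t := by
      simpa using ((hasDerivAt_id t).smul_const d).const_add x
    have hscale : HasDerivAt (fun s : ℝ => s • fderiv ℝ φ x d) (fderiv ℝ φ x d) t := by
      simpa using (hasDerivAt_id t).smul_const (fderiv ℝ φ x d)
    exact (((hφ _).hasFDerivAt.comp_hasDerivAt t hline).sub_const (φ x)).fun_sub hscale
  have hB : ∀ t, HasDerivAt (fun t => M / 2 * ‖d‖ ^ 2 * t ^ 2) (M * ‖d‖ ^ 2 * t) t := by
    intro t
    refine ((hasDerivAt_pow 2 t).const_mul (M / 2 * ‖d‖ ^ 2)).congr_deriv ?_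
    norm_num
    ring
  have hbound : ∀ t ∈ Set.Ico (0 : ℝ) 1,
      ‖fderiv ℝ φ (x + t • d) d - fderiv ℝ φ x d‖ ≤ M * ‖d‖ ^ 2 * t := by
    rintro t ⟨ht, -⟩
    calc ‖fderiv ℝ φ (x + t • d) d - fderiv ℝ φ x d‖
        = ‖(fderiv ℝ φ (x + t • d) - fderiv ℝ φ x) d‖ := rfl
      _ ≤ ‖fderiv ℝ φ (x + t • d) - fderiv ℝ φ x‖ * ‖d‖ := ContinuousLinearMap.le_opNorm _ _
      _ ≤ M * ‖(x + t • d) - x‖ * ‖d‖ := by gcongr; exact hLip _ _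
      _ = M * ‖d‖ ^ 2 * t := by
        rw [add_sub_cancel_left, norm_smul, Real.norm_of_nonneg ht]; ring
  simpa [ψ] using image_norm_le_of_norm_deriv_right_le_deriv_boundary
    (fun t _ => (hψ t).continuousAt.continuousWithinAt) (fun t _ => (hψ t).hasDerivWithinAt)
    (by simp [ψ]) hB hbound (Set.right_mem_Icc.2 zero_le_one)

theorem eight_mul_sqrt_six_mul_le (u v : ℝ) :
    8 * √6 * u ^ 3 * v ≤ 12 * u ^ 4 + 9 * v ^ 4 := by
  have h6 : √6 ^ 2 = 6 := sq_sqrt (by norm_num)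
  have hfactor : 9 * (12 * u ^ 4 + 9 * v ^ 4 - 8 * √6 * u ^ 3 * v)
      = (3 * v - √6 * u) ^ 2 * ((3 * v + √6 * u) ^ 2 + 12 * u ^ 2) := by
    linear_combination (18 * u ^ 2 * v ^ 2 - u ^ 4 * (√6 ^ 2 + 18)) * h6
  have hnonneg : 0 ≤ (3 * v - √6 * u) ^ 2 * ((3 * v + √6 * u) ^ 2 + 12 * u ^ 2) := by
    positivity
  linarith

-- The right-hand side is minimal at `t = √2 G^{1/2} / √(3M)`, where equality holds.
theorem sqrt_six_div_six_mul_rpow_div_sqrt_le {M t G : ℝ} (hM : 0 < M) (ht : 0 < t)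
    (hG : 0 ≤ G) :
    √6 / 6 * G ^ ((3 : ℝ) / 2) / √M ≤ G ^ 2 / (4 * M * t) + 3 / 16 * M * t ^ 3 := by
  obtain ⟨u, hu, rfl⟩ : ∃ u, 0 ≤ u ∧ G = u ^ 2 := ⟨√G, sqrt_nonneg G, (sq_sqrt hG).symm⟩
  obtain ⟨m, hm, rfl⟩ : ∃ m, 0 < m ∧ M = m ^ 2 := ⟨√M, sqrt_pos.2 hM, (sq_sqrt hM.le).symm⟩
  have h32 : (u ^ 2) ^ ((3 : ℝ) / 2) = u ^ 3 := by
    rw [← rpow_natCast, ← rpow_mul hu]; norm_num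
  rw [h32, sqrt_sq hm.le, ← sub_nonneg]
  have hclear : (u ^ 2) ^ 2 / (4 * m ^ 2 * t) + 3 / 16 * m ^ 2 * t ^ 3 - √6 / 6 * u ^ 3 / m
      = (12 * u ^ 4 + 9 * (m * t) ^ 4 - 8 * √6 * u ^ 3 * (m * t)) / (48 * m ^ 2 * t) := by
    field_simp
    ring
  rw [hclear]
  exact div_nonneg (sub_nonneg.2 (eight_mul_sqrt_six_mul_le u (m * t))) (by positivity)

theorem two_mul_mul_inner_neg_eq {E : Type*} [NormedAddCommGroup E] [InnerProductSpace ℝ E]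
    (g d : E) (μ : ℝ) :
    2 * μ * ⟪g, -d⟫ = ‖g‖ ^ 2 + μ ^ 2 * ‖d‖ ^ 2 - ‖g + μ • d‖ ^ 2 := by
  rw [norm_add_sq_real, inner_neg_right, real_inner_smul_right, norm_smul, norm_eq_abs,
    mul_pow, sq_abs]
  ring

theorem sq_div_add_cube_le_of_two_mul_mul_eq {M μ s G R X : ℝ} (hM : 0 < M) (hs : 0 < s)
    (hμl : M * s ≤ μ) (hμu : μ ≤ 2 * M * s) (hR₀ : 0 ≤ R) (hR : R ≤ M / 2 * s ^ 2)
    (hX : 2 * μ * X = G ^ 2 + μ ^ 2 * s ^ 2 - R ^ 2) :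
    G ^ 2 / (4 * M * s) + 3 / 16 * M * s ^ 3 ≤ X := by
  have hμ : 0 < μ := (mul_pos hM hs).trans_le hμl
  have hX' : X = μ * s ^ 2 / 2 + G ^ 2 / (2 * μ) - R ^ 2 / (2 * μ) := by
    field_simp
    linear_combination hX
  have hG : G ^ 2 / (4 * M * s) ≤ G ^ 2 / (2 * μ) :=
    div_le_div_of_nonneg_left (sq_nonneg G) (by positivity) (by linarith)
  have hRsq : R ^ 2 / (2 * μ) ≤ M * s ^ 3 / 8 := by
    rw [div_le_iff₀ (by positivity)]
    nlinarith [mul_le_mul hR hR hR₀ (by positivity)]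
  have hμs : M * s ^ 3 / 2 ≤ μ * s ^ 2 / 2 := by nlinarith [sq_nonneg s]
  have hMs : 0 < M * s ^ 3 := by positivity
  linarith

/-- If `f` is twice continuously differentiable with `M`-Lipschitz Hessian and
`(∇²f(x) + μI) d = -∇f(x)` with `M‖d‖ ≤ μ ≤ 2M‖d‖`, then
`⟨∇f(x+d), -d⟩ ≥ (√6/6)‖∇f(x+d)‖^{3/2}/√M`. -/
theorem stmt2 {n : ℕ} (f : EuclideanSpace ℝ (Fin n) → ℝ) (M μ : ℝ)
    (x d : EuclideanSpace ℝ (Fin n))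
    (hf : ContDiff ℝ 2 f) (hM : 0 < M)
    (hLip : ∀ u v : EuclideanSpace ℝ (Fin n),
      ‖fderiv ℝ (gradient f) u - fderiv ℝ (gradient f) v‖ ≤ M * ‖u - v‖)
    (hμl : M * ‖d‖ ≤ μ) (hμu : μ ≤ 2 * M * ‖d‖)
    (heq : (fderiv ℝ (gradient f) x) d + μ • d = - gradient f x) :
    ⟪gradient f (x + d), -d⟫ ≥
      Real.sqrt 6 / 6 * ‖gradient f (x + d)‖ ^ ((3 : ℝ) / 2) / Real.sqrt M := by
  rcases eq_or_ne d 0 with rfl | hd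
  · have hx : gradient f x = 0 := by simpa using heq.symm
    simp [hx, zero_rpow (by norm_num : (3 : ℝ) / 2 ≠ 0)]
  set g := gradient f (x + d)
  set r := g - gradient f x - fderiv ℝ (gradient f) x d
  have hr : ‖r‖ ≤ M / 2 * ‖d‖ ^ 2 :=
    norm_sub_sub_fderiv_le_of_lipschitz_fderiv
      ((hf.gradient (n := 1)).differentiable one_ne_zero) hLip x d
  have hgr : g + μ • d = r := by
    simp only [r]
    linear_combination (norm := module) heq
  have hinner := two_mul_mul_inner_neg_eq g d μ
  rw [hgr] at hinner
  calc √6 / 6 * ‖g‖ ^ ((3 : ℝ) / 2) / √M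
      ≤ ‖g‖ ^ 2 / (4 * M * ‖d‖) + 3 / 16 * M * ‖d‖ ^ 3 :=
        sqrt_six_div_six_mul_rpow_div_sqrt_le hM (norm_pos_iff.2 hd) (norm_nonneg g)
    _ ≤ ⟪g, -d⟫ :=
        sq_div_add_cube_le_of_two_mul_mul_eq hM (norm_pos_iff.2 hd) hμl hμu (norm_nonneg r) hr
          hinner
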